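/- arXiv:2501.16218 — 3 statements merged into one kernel-verified Lean document; each statement's English description precedes it below -/
import Mathlib

section
/- Let λ0, λ1 > 0 with λ0 ≠ λ1, and let s ∈ (0,1) be a point at which the derivative in s of s·λ0 + (1−s)·λ1 − λ0^s λ1^{1−s} vanishes. Set μ := λ0^s λ1^{1−s}. Then the Kullback–Leibler divergences between Poisson distributions satisfy D(Poi(μ)‖Poi(λ0)) = D(Poi(μ)‖Poi(λ1)) = s·λ0 + (1−s)·λ1 − λ0^s λ1^{1−s}, where D(Poi(μ)‖Poi(λ)) = λ − μ + μ·log(μ/λ). -/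
/-!
Write `μ = λ₀^s λ₁^(1-s)`, so that `log μ = s log λ₀ + (1-s) log λ₁`. The derivative of the
Chernoff divergence in `s` is `λ₀ - λ₁ - μ (log λ₀ - log λ₁)`, so stationarity says
`μ log (λ₀/λ₁) = λ₀ - λ₁`. Substituting both identities into `λ - μ + μ log (μ/λ)` for
`λ = λ₀, λ₁` turns each divergence into `s λ₀ + (1-s) λ₁ - μ`.
-/

open Real

namespace PoissonChernoff

noncomputable def poissonChernoff (s a b : ℝ) : ℝ := s * a + (1 - s) * b - a ^ s * b ^ (1 - s)

noncomputable def poissonKL (μ l : ℝ) : ℝ := l - μ + μ * log (μ / l)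

variable {a b : ℝ}

lemma log_rpow_mul_rpow (ha : 0 < a) (hb : 0 < b) (s : ℝ) :
    log (a ^ s * b ^ (1 - s)) = s * log a + (1 - s) * log b := by
  rw [log_mul (rpow_pos_of_pos ha s).ne' (rpow_pos_of_pos hb _).ne', log_rpow ha, log_rpow hb]

lemma hasDerivAt_rpow_mul_rpow (ha : 0 < a) (hb : 0 < b) (s : ℝ) :
    HasDerivAt (fun t : ℝ => a ^ t * b ^ (1 - t))
      (a ^ s * b ^ (1 - s) * (log a - log b)) s := by
  have hpow_a : HasDerivAt (fun t : ℝ => a ^ t) (a ^ s * log a) s :=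
    (hasStrictDerivAt_const_rpow ha s).hasDerivAt
  have hpow_b : HasDerivAt (fun t : ℝ => b ^ (1 - t)) (b ^ (1 - s) * log b * -1) s :=
    (hasStrictDerivAt_const_rpow hb (1 - s)).hasDerivAt.comp s ((hasDerivAt_id s).const_sub 1)
  exact (hpow_a.mul hpow_b).congr_deriv (by ring)

lemma hasDerivAt_poissonChernoff (ha : 0 < a) (hb : 0 < b) (s : ℝ) :
    HasDerivAt (fun t : ℝ => poissonChernoff t a b)
      (a - b - a ^ s * b ^ (1 - s) * (log a - log b)) s := by
  have hlin : HasDerivAt (fun t : ℝ => t * a + (1 - t) * b) (a - b) s := by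
    have hb_term : HasDerivAt (fun t : ℝ => (1 - t) * b) (-1 * b) s :=
      ((hasDerivAt_id s).const_sub 1).mul_const b
    exact (((hasDerivAt_id s).mul_const a).add hb_term).congr_deriv (by ring)
  exact hlin.sub (hasDerivAt_rpow_mul_rpow ha hb s)

lemma rpow_mul_rpow_mul_log_sub_of_hasDerivAt_zero (ha : 0 < a) (hb : 0 < b) {s : ℝ}
    (hderiv : HasDerivAt (fun t : ℝ => poissonChernoff t a b) 0 s) :
    a ^ s * b ^ (1 - s) * (log a - log b) = a - b := by
  have h := (hasDerivAt_poissonChernoff ha hb s).unique hderiv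
  linarith

lemma poissonKL_rpow_mul_rpow_eq_poissonChernoff (ha : 0 < a) (hb : 0 < b) {s : ℝ}
    (hstat : a ^ s * b ^ (1 - s) * (log a - log b) = a - b) :
    poissonKL (a ^ s * b ^ (1 - s)) a = poissonChernoff s a b ∧
      poissonKL (a ^ s * b ^ (1 - s)) b = poissonChernoff s a b := by
  have hμ : 0 < a ^ s * b ^ (1 - s) := mul_pos (rpow_pos_of_pos ha s) (rpow_pos_of_pos hb _)
  unfold poissonKL poissonChernoff
  rw [log_div hμ.ne' ha.ne', log_div hμ.ne' hb.ne', log_rpow_mul_rpow ha hb]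
  constructor
  · linear_combination (s - 1) * hstat
  · linear_combination s * hstat

end PoissonChernoff

open PoissonChernoff in
theorem kl_at_chernoff_stationary_point_general (l0 l1 s : ℝ) (h0 : 0 < l0) (h1 : 0 < l1)
    (hderiv : HasDerivAt (fun t : ℝ => t * l0 + (1 - t) * l1 - l0 ^ t * l1 ^ (1 - t)) 0 s) :
    l0 - l0 ^ s * l1 ^ (1 - s) +
        (l0 ^ s * l1 ^ (1 - s)) * Real.log ((l0 ^ s * l1 ^ (1 - s)) / l0)
      = s * l0 + (1 - s) * l1 - l0 ^ s * l1 ^ (1 - s) ∧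
    l1 - l0 ^ s * l1 ^ (1 - s) +
        (l0 ^ s * l1 ^ (1 - s)) * Real.log ((l0 ^ s * l1 ^ (1 - s)) / l1)
      = s * l0 + (1 - s) * l1 - l0 ^ s * l1 ^ (1 - s) :=
  poissonKL_rpow_mul_rpow_eq_poissonChernoff h0 h1
    (rpow_mul_rpow_mul_log_sub_of_hasDerivAt_zero h0 h1 hderiv)

/-- At a stationary point `s ∈ (0,1)` of the Chernoff `s`-divergence between Poisson
distributions with distinct rates `l0 ≠ l1`, setting `μ := l0^s * l1^(1-s)`, the
Kullback–Leibler divergences `D(Poi(μ)‖Poi(l0))` and `D(Poi(μ)‖Poi(l1))` (given by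
`λ - μ + μ·log(μ/λ)`) both equal the Chernoff `s`-divergence
`s*l0 + (1-s)*l1 - l0^s*l1^(1-s)`. -/
theorem kl_at_chernoff_stationary_point (l0 l1 s : ℝ) (h0 : 0 < l0) (h1 : 0 < l1)
    (hne : l0 ≠ l1) (hs : s ∈ Set.Ioo (0 : ℝ) 1)
    (hderiv : HasDerivAt (fun t : ℝ => t * l0 + (1 - t) * l1 - l0 ^ t * l1 ^ (1 - t)) 0 s) :
    l0 - l0 ^ s * l1 ^ (1 - s) +
        (l0 ^ s * l1 ^ (1 - s)) * Real.log ((l0 ^ s * l1 ^ (1 - s)) / l0)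
      = s * l0 + (1 - s) * l1 - l0 ^ s * l1 ^ (1 - s) ∧
    l1 - l0 ^ s * l1 ^ (1 - s) +
        (l0 ^ s * l1 ^ (1 - s)) * Real.log ((l0 ^ s * l1 ^ (1 - s)) / l1)
      = s * l0 + (1 - s) * l1 - l0 ^ s * l1 ^ (1 - s) :=
  kl_at_chernoff_stationary_point_general l0 l1 s h0 h1 hderiv
end

section
/- The function S(R) := log((R−1)/log R)/log R is strictly increasing on the interval (0,1), satisfies lim_{R→0+} S(R) = 0 and lim_{R→1−} S(R) = 1/2, and consequently S(R) ∈ (0, 1/2) for every R ∈ (0,1). -/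
/-!
Substituting `R = exp (-t)` turns `S` into `g t / t`, where `g = chernoffG` is
`t ↦ log t - log (1 - exp (-t))`: the slope of the chord of `g` from the origin (`g 0 = 0` is
both the limit at `0⁺` and the value Lean's `log 0 = 0` gives). `g'' < 0` amounts to
`t ^ 2 * exp t < (exp t - 1) ^ 2`, i.e. `t / 2 < sinh (t / 2)`, so `g` is strictly concave on
`[0, ∞)` and its chord slopes from the origin strictly decrease; as `R ↦ -log R` is decreasing,
`S` increases. The slopes tend to `g'(0⁺) = 1 / 2` as `t → 0` (l'Hôpital) and to `0` as
`t → ∞`, and `g > 0` since `1 - exp (-t) < t`.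
-/

/-- The function `S(R) = log((R-1)/log R)/log R` on `(0,1)`. -/
noncomputable def chernoffS (R : ℝ) : ℝ :=
  Real.log ((R - 1) / Real.log R) / Real.log R

open Real Filter Set Topology

lemma StrictAntiOn.lt_of_tendsto_nhdsGT {α β : Type*} [LinearOrder α] [TopologicalSpace α]
    [OrderTopology α] [DenselyOrdered α] [Preorder β] [TopologicalSpace β] [ClosedIciTopology β]
    {f : α → β} {a t : α} {l : β} (hf : StrictAntiOn f (Ioi a)) (hl : Tendsto f (𝓝[>] a) (𝓝 l))
    (ht : a < t) : f t < l := by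
  obtain ⟨m, ham, hmt⟩ := exists_between ht
  have hle : f m ≤ l := by
    have := nhdsGT_neBot_of_exists_gt ⟨t, ht⟩
    refine ge_of_tendsto hl ?_
    filter_upwards [Ioo_mem_nhdsGT ham] with s hs using (hf hs.1 ham hs.2).le
  exact (hf ham ht hmt).trans_le hle

lemma exp_sub_one_pos {t : ℝ} (ht : 0 < t) : 0 < exp t - 1 :=
  sub_pos.mpr (one_lt_exp_iff.mpr ht)

lemma one_sub_exp_neg_pos {t : ℝ} (ht : 0 < t) : 0 < 1 - exp (-t) :=
  sub_pos.mpr (exp_lt_one_iff.mpr (neg_lt_zero.mpr ht))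

lemma sq_mul_exp_lt_sq_exp_sub_one {t : ℝ} (ht : 0 < t) : t ^ 2 * exp t < (exp t - 1) ^ 2 := by
  have hsinh : t / 2 < sinh (t / 2) := self_lt_sinh_iff.mpr (by positivity)
  have hexp : exp t = exp (t / 2) ^ 2 := by rw [← exp_nat_mul]; ring_nf
  have hsub : exp t - 1 = 2 * exp (t / 2) * sinh (t / 2) := by
    rw [sinh_eq, exp_neg, hexp]; field_simp
  calc t ^ 2 * exp t = 4 * exp (t / 2) ^ 2 * (t / 2) ^ 2 := by rw [hexp]; ring
    _ < 4 * exp (t / 2) ^ 2 * sinh (t / 2) ^ 2 := by gcongr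
    _ = (exp t - 1) ^ 2 := by rw [hsub]; ring

lemma tendsto_exp_sub_one_div : Tendsto (fun t => (exp t - 1) / t) (𝓝[≠] 0) (𝓝 1) := by
  simpa [div_eq_inv_mul] using (hasDerivAt_exp 0).tendsto_slope_zero

lemma tendsto_exp_sub_one_sub_div_sq :
    Tendsto (fun t => (exp t - 1 - t) / t ^ 2) (𝓝[≠] 0) (𝓝 (1 / 2)) := by
  have h := ((exp_sub_sum_range_succ_isLittleO_pow 2).tendsto_div_nhds_zero.mono_left
    (nhdsWithin_le_nhds (s := {0}ᶜ))).add_const (1 / 2)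
  rw [zero_add] at h
  refine h.congr' ?_
  filter_upwards [self_mem_nhdsWithin] with t (ht : t ≠ 0)
  simp only [Finset.sum_range_succ, Finset.range_one, Finset.sum_singleton, pow_zero, pow_one,
    Nat.factorial_zero, Nat.factorial_one, Nat.factorial_two, Nat.cast_one, Nat.cast_ofNat, div_one]
  field_simp
  ring

noncomputable def chernoffG (t : ℝ) : ℝ := log t - log (1 - exp (-t))

lemma chernoffS_eq {R : ℝ} (hR₀ : 0 < R) (hR₁ : R ≠ 1) :
    chernoffS R = chernoffG (-log R) / (-log R) := by
  have hquot : (R - 1) / log R = (1 - R) / (-log R) := by rw [← neg_div_neg_eq, neg_sub]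
  have hlog : -log R ≠ 0 := neg_ne_zero.mpr (log_ne_zero_of_pos_of_ne_one hR₀ hR₁)
  rw [chernoffS, chernoffG, neg_neg, exp_log hR₀, hquot, log_div (sub_ne_zero.mpr hR₁.symm) hlog,
    ← neg_div_neg_eq]
  ring

lemma chernoffG_zero : chernoffG 0 = 0 := by simp [chernoffG]

lemma chernoffG_pos {t : ℝ} (ht : 0 < t) : 0 < chernoffG t := by
  have hlt : 1 - exp (-t) < t := by linarith [add_one_lt_exp (neg_ne_zero.mpr ht.ne')]
  exact sub_pos.mpr (log_lt_log (one_sub_exp_neg_pos ht) hlt)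

lemma tendsto_chernoffG_nhdsGT_zero : Tendsto chernoffG (𝓝[>] 0) (𝓝 0) := by
  have hu : Tendsto (fun t => exp (-t) * ((exp t - 1) / t)) (𝓝[>] 0) (𝓝 1) := by
    simpa using ((continuous_exp.comp continuous_neg).tendsto' 0 1 (by simp)).mono_left
      nhdsWithin_le_nhds |>.mul (tendsto_exp_sub_one_div.mono_left (nhdsGT_le_nhdsNE 0))
  have h := ((continuousAt_log one_ne_zero).tendsto.comp hu).neg
  rw [log_one, neg_zero] at h
  refine h.congr' ?_
  filter_upwards [self_mem_nhdsWithin] with t (ht : 0 < t)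
  have : exp (-t) * ((exp t - 1) / t) = (1 - exp (-t)) / t := by
    rw [exp_neg]; field_simp
  simp only [Function.comp_apply, this, log_div (one_sub_exp_neg_pos ht).ne' ht.ne', chernoffG]
  ring

lemma hasDerivAt_chernoffG {t : ℝ} (ht : 0 < t) :
    HasDerivAt chernoffG (t⁻¹ - (exp t - 1)⁻¹) t := by
  have h := (hasDerivAt_log ht.ne').fun_sub
    ((((hasDerivAt_neg t).exp).const_sub 1).log (one_sub_exp_neg_pos ht).ne')
  refine h.congr_deriv ?_
  have := (exp_sub_one_pos ht).ne'
  rw [exp_neg]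
  field_simp

lemma hasDerivAt_inv_sub_inv_exp_sub_one {t : ℝ} (ht : 0 < t) :
    HasDerivAt (fun s => s⁻¹ - (exp s - 1)⁻¹) (-(t ^ 2)⁻¹ + exp t / (exp t - 1) ^ 2) t := by
  have hE := (exp_sub_one_pos ht).ne'
  refine ((hasDerivAt_inv ht.ne').fun_sub
    (((hasDerivAt_exp t).sub_const 1).fun_inv hE)).congr_deriv ?_
  ring

lemma strictAntiOn_deriv_chernoffG : StrictAntiOn (deriv chernoffG) (Ioi 0) := by
  have hanti : StrictAntiOn (fun s => s⁻¹ - (exp s - 1)⁻¹) (Ioi 0) := by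
    refine strictAntiOn_of_hasDerivWithinAt_neg (convex_Ioi 0)
      (fun t ht => (hasDerivAt_inv_sub_inv_exp_sub_one ht).continuousAt.continuousWithinAt)
      (fun t ht => (hasDerivAt_inv_sub_inv_exp_sub_one (interior_subset ht)).hasDerivWithinAt) ?_
    intro t ht
    rw [interior_Ioi] at ht
    have hsq := sq_mul_exp_lt_sq_exp_sub_one ht
    have hE := exp_sub_one_pos ht
    rw [neg_add_lt_iff_lt_add, add_zero, ← one_div, div_lt_div_iff₀ (pow_pos hE 2) (pow_pos ht 2),
      one_mul, mul_comm]
    exact hsq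
  exact hanti.congr fun t ht => ((hasDerivAt_chernoffG ht).deriv).symm

lemma continuousOn_chernoffG : ContinuousOn chernoffG (Ici 0) := by
  intro t (ht : 0 ≤ t)
  rcases ht.eq_or_lt with rfl | ht
  · rw [← continuousWithinAt_Ioi_iff_Ici, ContinuousWithinAt, chernoffG_zero]
    exact tendsto_chernoffG_nhdsGT_zero
  · exact (hasDerivAt_chernoffG ht).continuousAt.continuousWithinAt

lemma strictConcaveOn_chernoffG : StrictConcaveOn ℝ (Ici 0) chernoffG :=
  StrictAntiOn.strictConcaveOn_of_deriv (convex_Ici 0) continuousOn_chernoffG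
    (by rw [interior_Ici]; exact strictAntiOn_deriv_chernoffG)

lemma strictAntiOn_chernoffG_div : StrictAntiOn (fun t => chernoffG t / t) (Ioi 0) := by
  intro s (hs : 0 < s) t (ht : 0 < t) hst
  simpa [chernoffG_zero] using strictConcaveOn_chernoffG.secant_strict_mono (a := 0)
    (mem_Ici.mpr le_rfl) (mem_Ici.mpr hs.le) (mem_Ici.mpr ht.le) hs.ne' ht.ne' hst

lemma tendsto_inv_sub_inv_exp_sub_one :
    Tendsto (fun t => t⁻¹ - (exp t - 1)⁻¹) (𝓝[≠] 0) (𝓝 (1 / 2)) := by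
  have h := tendsto_exp_sub_one_sub_div_sq.div tendsto_exp_sub_one_div one_ne_zero
  rw [div_one] at h
  refine h.congr' ?_
  filter_upwards [self_mem_nhdsWithin] with t (ht : t ≠ 0)
  have : exp t - 1 ≠ 0 := by
    rw [sub_ne_zero, Ne, exp_eq_one_iff]; exact ht
  simp only [Pi.div_apply]
  field_simp

lemma tendsto_chernoffG_div_nhdsGT_zero :
    Tendsto (fun t => chernoffG t / t) (𝓝[>] 0) (𝓝 (1 / 2)) :=
  HasDerivAt.lhopital_zero_right_on_Ico one_pos (fun t ht => hasDerivAt_chernoffG ht.1)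
    (fun t _ => hasDerivAt_id t) (continuousOn_chernoffG.mono Ico_subset_Ici_self)
    continuousOn_id (fun _ _ => one_ne_zero) chernoffG_zero rfl
    (by simpa using tendsto_inv_sub_inv_exp_sub_one.mono_left (nhdsGT_le_nhdsNE 0))

lemma tendsto_chernoffG_div_atTop : Tendsto (fun t => chernoffG t / t) atTop (𝓝 0) := by
  have hlog : Tendsto (fun t => log t / t) atTop (𝓝 0) := by
    simpa using tendsto_pow_log_div_mul_add_atTop 1 0 1 one_ne_zero
  have hexp : Tendsto (fun t => log (1 - exp (-t))) atTop (𝓝 0) := by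
    have h := (tendsto_exp_atBot.comp tendsto_neg_atTop_atBot).const_sub 1
    simpa [Function.comp_def] using (continuousAt_log one_ne_zero).tendsto.comp (by simpa using h)
  have h := hlog.sub (hexp.mul tendsto_inv_atTop_zero)
  simpa [chernoffG, sub_mul, div_eq_mul_inv] using h


/-- `S(R) := log((R-1)/log R)/log R` is strictly increasing on `(0,1)`, tends to `0`
as `R → 0⁺`, tends to `1/2` as `R → 1⁻`, and satisfies `S(R) ∈ (0,1/2)` on `(0,1)`. -/
theorem chernoffS_properties :
    StrictMonoOn chernoffS (Set.Ioo (0 : ℝ) 1) ∧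
    Filter.Tendsto chernoffS (nhdsWithin 0 (Set.Ioi (0 : ℝ))) (nhds 0) ∧
    Filter.Tendsto chernoffS (nhdsWithin 1 (Set.Iio (1 : ℝ))) (nhds (1 / 2)) ∧
    ∀ R ∈ Set.Ioo (0 : ℝ) 1, chernoffS R ∈ Set.Ioo (0 : ℝ) (1 / 2) := by
  have heq : EqOn chernoffS ((fun t => chernoffG t / t) ∘ fun R => -log R) (Ioo 0 1) :=
    fun R hR => chernoffS_eq hR.1 hR.2.ne
  have hmaps : MapsTo (fun R => -log R) (Ioo 0 1) (Ioi 0) :=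
    fun R hR => neg_pos.mpr (log_neg hR.1 hR.2)
  have hanti : StrictAntiOn (fun R => -log R) (Ioo 0 1) :=
    fun a ha b _ hab => neg_lt_neg (log_lt_log ha.1 hab)
  refine ⟨(strictAntiOn_chernoffG_div.comp hanti hmaps).congr heq.symm, ?_, ?_, fun R hR => ?_⟩
  · have hlim : Tendsto (fun R => -log R) (𝓝[>] 0) atTop :=
      tendsto_neg_atBot_atTop.comp tendsto_log_nhdsGT_zero
    refine (tendsto_chernoffG_div_atTop.comp hlim).congr' (EventuallyEq.symm ?_)
    exact heq.eventuallyEq_of_mem (Ioo_mem_nhdsGT one_pos)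
  · have hlim : Tendsto (fun R => -log R) (𝓝[<] 1) (𝓝[>] 0) := by
      refine tendsto_nhdsWithin_iff.mpr ⟨?_, ?_⟩
      · simpa using (continuousAt_log one_ne_zero).tendsto.neg.mono_left nhdsWithin_le_nhds
      · filter_upwards [Ioo_mem_nhdsLT one_pos] with R hR using hmaps hR
    refine (tendsto_chernoffG_div_nhdsGT_zero.comp hlim).congr' (EventuallyEq.symm ?_)
    exact heq.eventuallyEq_of_mem (Ioo_mem_nhdsLT one_pos)
  · rw [heq hR]
    exact ⟨div_pos (chernoffG_pos (hmaps hR)) (hmaps hR),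
      strictAntiOn_chernoffG_div.lt_of_tendsto_nhdsGT tendsto_chernoffG_div_nhdsGT_zero (hmaps hR)⟩
end

section
/- Let 0 < λ0 < λ1. Then the function s ↦ C_s(λ0,λ1) = s·λ0 + (1−s)·λ1 − λ0^s λ1^{1−s} attains its maximum over [0,1] at a unique point s*, and s* ∈ (0, 1/2). Consequently, C_s(λ0,λ1) is strictly decreasing in s on the interval [1/2, 1]. -/
/-
The derivative `C'(s) = l0 - l1 - l0^s l1^(1-s) (log l0 - log l1)` of `C = chernoffPoisson l0 l1`
is strictly decreasing because `s ↦ l0^s l1^(1-s)` is the exponential of an affine function.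
`C'(0) > 0` is `log x < x - 1` at `x = l0 / l1`, and `C'(1/2) < 0` is `x < sinh x`; so `C'`
vanishes at a unique `s* ∈ (0, 1/2)`, before which `C` increases and after which it decreases.
-/

/-- The Chernoff `s`-divergence between Poisson distributions with rates `l0` and `l1`. -/
noncomputable def chernoffPoisson (l0 l1 s : ℝ) : ℝ :=
  s * l0 + (1 - s) * l1 - l0 ^ s * l1 ^ (1 - s)

open Real Set

section
variable {f f' : ℝ → ℝ} {c : ℝ}

lemma strictMonoOn_Iic_of_hasDerivAt_of_strictAnti (hf : ∀ x, HasDerivAt f (f' x) x)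
    (hf' : StrictAnti f') (hc : f' c = 0) : StrictMonoOn f (Iic c) :=
  strictMonoOn_of_hasDerivWithinAt_pos (convex_Iic c)
    (fun x _ => (hf x).continuousAt.continuousWithinAt) (fun x _ => (hf x).hasDerivWithinAt)
    (fun x hx => by rw [interior_Iic] at hx; exact hc ▸ hf' hx)

lemma strictAntiOn_Ici_of_hasDerivAt_of_strictAnti (hf : ∀ x, HasDerivAt f (f' x) x)
    (hf' : StrictAnti f') (hc : f' c = 0) : StrictAntiOn f (Ici c) :=
  strictAntiOn_of_hasDerivWithinAt_neg (convex_Ici c)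
    (fun x _ => (hf x).continuousAt.continuousWithinAt) (fun x _ => (hf x).hasDerivWithinAt)
    (fun x hx => by rw [interior_Ici] at hx; exact hc ▸ hf' hx)

lemma apply_lt_of_ne_of_hasDerivAt_of_strictAnti (hf : ∀ x, HasDerivAt f (f' x) x)
    (hf' : StrictAnti f') (hc : f' c = 0) {t : ℝ} (ht : t ≠ c) : f t < f c := by
  rcases ht.lt_or_gt with h | h
  · exact strictMonoOn_Iic_of_hasDerivAt_of_strictAnti hf hf' hc h.le (mem_Iic.2 le_rfl) h
  · exact strictAntiOn_Ici_of_hasDerivAt_of_strictAnti hf hf' hc (mem_Ici.2 le_rfl) h.le h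

end

noncomputable def chernoffPoissonDeriv (l0 l1 s : ℝ) : ℝ :=
  l0 - l1 - l0 ^ s * l1 ^ (1 - s) * (log l0 - log l1)

section
variable {l0 l1 : ℝ}

lemma rpow_mul_rpow_one_sub_eq_exp (h0 : 0 < l0) (h1 : 0 < l1) (s : ℝ) :
    l0 ^ s * l1 ^ (1 - s) = exp (log l1 + s * (log l0 - log l1)) := by
  rw [rpow_def_of_pos h0, rpow_def_of_pos h1, ← exp_add]
  ring_nf

lemma hasDerivAt_rpow_mul_rpow_one_sub (h0 : 0 < l0) (h1 : 0 < l1) (s : ℝ) :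
    HasDerivAt (fun s => l0 ^ s * l1 ^ (1 - s)) (l0 ^ s * l1 ^ (1 - s) * (log l0 - log l1)) s := by
  simp only [rpow_mul_rpow_one_sub_eq_exp h0 h1]
  exact ((hasDerivAt_mul_const _).const_add _).exp

lemma hasDerivAt_chernoffPoisson (h0 : 0 < l0) (h1 : 0 < l1) (s : ℝ) :
    HasDerivAt (chernoffPoisson l0 l1) (chernoffPoissonDeriv l0 l1 s) s :=
  ((((hasDerivAt_id' s).mul_const l0).add (((hasDerivAt_id' s).const_sub 1).mul_const l1)).sub
    (hasDerivAt_rpow_mul_rpow_one_sub h0 h1 s)).congr_deriv (by rw [chernoffPoissonDeriv]; ring)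

lemma continuous_chernoffPoissonDeriv (h0 : 0 < l0) (h1 : 0 < l1) :
    Continuous (chernoffPoissonDeriv l0 l1) := by
  unfold chernoffPoissonDeriv
  simp only [rpow_mul_rpow_one_sub_eq_exp h0 h1]
  fun_prop

lemma strictAnti_chernoffPoissonDeriv (h0 : 0 < l0) (h1 : 0 < l1) (h : l0 ≠ l1) :
    StrictAnti (chernoffPoissonDeriv l0 l1) := by
  have hlog : log l0 - log l1 ≠ 0 := sub_ne_zero.2 (log_injOn_pos.ne h0 h1 h)
  refine strictAnti_of_hasDerivAt_neg
    (f' := fun s => -(l0 ^ s * l1 ^ (1 - s) * (log l0 - log l1) ^ 2)) (fun s => ?_)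
    (fun s => neg_lt_zero.2 (by positivity))
  exact ((hasDerivAt_rpow_mul_rpow_one_sub h0 h1 s).mul_const (log l0 - log l1)).const_sub
    (l0 - l1) |>.congr_deriv (by ring)

lemma chernoffPoissonDeriv_zero_pos (h0 : 0 < l0) (h1 : 0 < l1) (h : l0 ≠ l1) :
    0 < chernoffPoissonDeriv l0 l1 0 := by
  have hlog : log l0 - log l1 ≠ 0 := sub_ne_zero.2 (log_injOn_pos.ne h0 h1 h)
  have hexp : log l0 - log l1 + 1 < l0 / l1 := by
    simpa [← log_div h0.ne' h1.ne', exp_log (div_pos h0 h1)] using add_one_lt_exp hlog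
  have := (lt_div_iff₀ h1).1 hexp
  rw [chernoffPoissonDeriv, rpow_zero, sub_zero, rpow_one, one_mul]
  linarith

-- With `l0 = m e⁻ˣ`, `l1 = m eˣ` for the geometric mean `m`, this is `x < sinh x`.
lemma chernoffPoissonDeriv_half_neg (h0 : 0 < l0) (h01 : l0 < l1) :
    chernoffPoissonDeriv l0 l1 (1 / 2) < 0 := by
  obtain ⟨a, rfl⟩ : ∃ a, l0 = exp a := ⟨log l0, (exp_log h0).symm⟩
  obtain ⟨b, rfl⟩ : ∃ b, l1 = exp b := ⟨log l1, (exp_log (h0.trans h01)).symm⟩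
  have hx : 0 < (b - a) / 2 := by linarith [exp_lt_exp.1 h01]
  have hsinh := self_lt_sinh_iff.2 hx
  rw [sinh_eq] at hsinh
  have ha : exp a = exp ((a + b) / 2) * exp (-((b - a) / 2)) := by rw [← exp_add]; ring_nf
  have hb : exp b = exp ((a + b) / 2) * exp ((b - a) / 2) := by rw [← exp_add]; ring_nf
  rw [chernoffPoissonDeriv, rpow_mul_rpow_one_sub_eq_exp (exp_pos a) (exp_pos b), log_exp,
    log_exp, show b + 1 / 2 * (a - b) = (a + b) / 2 by ring]
  linarith [mul_lt_mul_of_pos_left hsinh (exp_pos ((a + b) / 2))]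

end

/-- For `0 < l0 < l1`, the map `s ↦ C_s(l0,l1)` attains its maximum over `[0,1]` at a
unique point `s*`, which lies in `(0,1/2)`; consequently `s ↦ C_s(l0,l1)` is strictly
decreasing on `[1/2,1]`. -/
theorem chernoff_poisson_unique_maximizer (l0 l1 : ℝ) (h0 : 0 < l0) (h01 : l0 < l1) :
    (∃ sStar ∈ Set.Ioo (0 : ℝ) (1 / 2),
      (∀ t ∈ Set.Icc (0 : ℝ) 1, chernoffPoisson l0 l1 t ≤ chernoffPoisson l0 l1 sStar) ∧
      (∀ t ∈ Set.Icc (0 : ℝ) 1,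
        (∀ u ∈ Set.Icc (0 : ℝ) 1, chernoffPoisson l0 l1 u ≤ chernoffPoisson l0 l1 t) →
          t = sStar)) ∧
    StrictAntiOn (fun s => chernoffPoisson l0 l1 s) (Set.Icc (1 / 2 : ℝ) 1) := by
  have h1 : 0 < l1 := h0.trans h01
  obtain ⟨c, hc, hc0⟩ : ∃ c ∈ Ioo (0 : ℝ) (1 / 2), chernoffPoissonDeriv l0 l1 c = 0 :=
    intermediate_value_Ioo' (by norm_num) (continuous_chernoffPoissonDeriv h0 h1).continuousOn
      ⟨chernoffPoissonDeriv_half_neg h0 h01, chernoffPoissonDeriv_zero_pos h0 h1 h01.ne⟩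
  have hderiv := hasDerivAt_chernoffPoisson h0 h1
  have hanti := strictAnti_chernoffPoissonDeriv h0 h1 h01.ne
  have hlt : ∀ t ≠ c, chernoffPoisson l0 l1 t < chernoffPoisson l0 l1 c :=
    fun t ht => apply_lt_of_ne_of_hasDerivAt_of_strictAnti hderiv hanti hc0 ht
  have hc1 : c ∈ Icc (0 : ℝ) 1 := ⟨hc.1.le, by linarith [hc.2]⟩
  refine ⟨⟨c, hc, fun t _ => ?_, fun t _ hmax => ?_⟩, ?_⟩
  · rcases eq_or_ne t c with rfl | ht
    exacts [le_rfl, (hlt t ht).le]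
  · by_contra ht
    exact (hlt t ht).not_ge (hmax c hc1)
  · exact (strictAntiOn_Ici_of_hasDerivAt_of_strictAnti hderiv hanti hc0).mono
      fun s hs => le_trans hc.2.le hs.1
end
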